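/- arXiv:2107.01512 — 2 statements merged into one kernel-verified Lean document; each statement's English description precedes it below -/
import Mathlib

section
/- Let Φ be an irreducible root system not of type A, with highest root θ and i₀ the unique simple root index with (α_{i₀}, θ) ≠ 0. Then θ − α_{i₀} is a root, and every root β ∈ Φ with β ≠ θ satisfies β ≤ θ − α_{i₀} in the dominance order; in particular ⟨β, θ∨⟩ ≤ ⟨θ − α_{i₀}, θ∨⟩ = 1. -/
open scoped RealInnerProductSpace

/-- The pairing `⟨β, α∨⟩ = 2(β,α)/(α,α)`. -/
noncomputable def pairing {V : Type*} [NormedAddCommGroup V] [InnerProductSpace ℝ V]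
    (β α : V) : ℝ := 2 * ⟪β, α⟫ / ⟪α, α⟫

/-- A reduced crystallographic root system in a real inner product space,
equipped with a base (system of simple roots) `Δ` and the integer coefficients
of each root with respect to the base. -/
structure BasedRootSystem (ℓ : ℕ) (V : Type*) [NormedAddCommGroup V]
    [InnerProductSpace ℝ V] where
  Φ : Set V
  finite : Φ.Finite
  nonzero : ∀ α ∈ Φ, α ≠ 0
  spanning : Submodule.span ℝ Φ = ⊤
  crystallographic : ∀ α ∈ Φ, ∀ β ∈ Φ, ∃ n : ℤ, pairing β α = (n : ℝ)
  reflect_mem : ∀ α ∈ Φ, ∀ β ∈ Φ, β - pairing β α • α ∈ Φ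
  reduced : ∀ α ∈ Φ, ∀ t : ℝ, t • α ∈ Φ → t = 1 ∨ t = -1
  Δ : Fin ℓ → V
  Δ_mem : ∀ i, Δ i ∈ Φ
  Δ_indep : LinearIndependent ℝ Δ
  coeff : V → Fin ℓ → ℤ
  coeff_spec : ∀ α ∈ Φ, α = ∑ i, (coeff α i : ℝ) • Δ i
  coeff_sign : ∀ α ∈ Φ, (∀ i, 0 ≤ coeff α i) ∨ (∀ i, coeff α i ≤ 0)

namespace BasedRootSystem

variable {ℓ : ℕ} {V : Type*} [NormedAddCommGroup V] [InnerProductSpace ℝ V]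

/-- A root is positive when all of its coefficients with respect to the base
are nonnegative. -/
def IsPositive (R : BasedRootSystem ℓ V) (α : V) : Prop :=
  α ∈ R.Φ ∧ ∀ i, 0 ≤ R.coeff α i

/-- The highest root: the (unique) maximal root in the dominance order, i.e. its
coefficients dominate the coefficients of every root. -/
def IsHighestRoot (R : BasedRootSystem ℓ V) (θ : V) : Prop :=
  θ ∈ R.Φ ∧ ∀ β ∈ R.Φ, ∀ i, R.coeff β i ≤ R.coeff θ i

/-- Irreducibility: the set of roots admits no nontrivial orthogonal partition. -/
def IsIrreducible (R : BasedRootSystem ℓ V) : Prop :=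
  ∀ S ⊆ R.Φ, (∀ α ∈ S, ∀ β ∈ R.Φ, β ∉ S → ⟪α, β⟫ = 0) → S = ∅ ∨ S = R.Φ

end BasedRootSystem

/-- The root system is of type `A_ℓ` when, after permuting the simple roots, its
Cartan matrix is the Cartan matrix of type `A_ℓ`. -/
def BasedRootSystem.IsTypeA {ℓ : ℕ} {V : Type*} [NormedAddCommGroup V]
    [InnerProductSpace ℝ V] (R : BasedRootSystem ℓ V) : Prop :=
  ∃ σ : Equiv.Perm (Fin ℓ), ∀ i j : Fin ℓ,
    pairing (R.Δ (σ i)) (R.Δ (σ j)) =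
      if i = j then 2
      else if (i : ℕ) + 1 = (j : ℕ) ∨ (j : ℕ) + 1 = (i : ℕ) then -1 else 0

/-!
The highest root `θ` dominates every root. Reflecting `θ` in a simple root `α_i` therefore cannot
raise its `α_i`-coefficient, so `(α_i, θ) ≥ 0`; reflecting a root `β` in `θ` gives the root
`β - ⟨β, θ∨⟩ θ`, whose negative is dominated by `θ`, so `⟨β, θ∨⟩ ≤ 1` unless `β = θ`.
Hence `⟨α_{i₀}, θ∨⟩ = 1` (note `α_{i₀} ≠ θ`, as otherwise the rank is one, i.e. the type is `A₁`),
and `θ - α_{i₀} = -s_θ(α_{i₀})` is a root. Finally, if a root `β ≠ θ` had the same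
`α_{i₀}`-coefficient as `θ`, then `θ - β` would be a combination of simple roots orthogonal to `θ`,
giving `⟨β, θ∨⟩ = 2`.
-/

section Pairing

variable {V : Type*} [NormedAddCommGroup V] [InnerProductSpace ℝ V]

lemma pairing_self {α : V} (hα : α ≠ 0) : pairing α α = 2 := by
  rw [pairing, mul_div_assoc, div_self (inner_self_ne_zero.mpr hα), mul_one]

lemma pairing_sub_left (β γ α : V) : pairing (β - γ) α = pairing β α - pairing γ α := by
  simp only [pairing, inner_sub_left]
  ring

lemma pairing_eq_mul_inner (β α : V) : pairing β α = 2 / ⟪α, α⟫ * ⟪β, α⟫ := by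
  rw [pairing]
  ring

lemma pairing_nonneg_iff {β α : V} (hα : α ≠ 0) : 0 ≤ pairing β α ↔ 0 ≤ ⟪β, α⟫ := by
  rw [pairing_eq_mul_inner]
  exact mul_nonneg_iff_of_pos_left (div_pos two_pos (real_inner_self_pos.mpr hα))

lemma pairing_pos_iff {β α : V} (hα : α ≠ 0) : 0 < pairing β α ↔ 0 < ⟪β, α⟫ := by
  rw [pairing_eq_mul_inner]
  exact mul_pos_iff_of_pos_left (div_pos two_pos (real_inner_self_pos.mpr hα))

end Pairing

namespace BasedRootSystem

variable {ℓ : ℕ} {V : Type*} [NormedAddCommGroup V] [InnerProductSpace ℝ V]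
  (R : BasedRootSystem ℓ V)

lemma coeff_eq_of_eq_sum {γ : V} (hγ : γ ∈ R.Φ) (c : Fin ℓ → ℤ)
    (hc : γ = ∑ i, (c i : ℝ) • R.Δ i) : R.coeff γ = c := by
  have h := R.Δ_indep.fintypeLinearCombination_injective
    (a₁ := fun i => (R.coeff γ i : ℝ)) (a₂ := fun i => (c i : ℝ))
    (by simp only [Fintype.linearCombination_apply, ← R.coeff_spec γ hγ, ← hc])
  funext i
  exact_mod_cast congrFun h i

lemma eq_of_coeff_eq {α β : V} (hα : α ∈ R.Φ) (hβ : β ∈ R.Φ)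
    (h : ∀ i, R.coeff α i = R.coeff β i) : α = β := by
  rw [R.coeff_spec α hα, R.coeff_spec β hβ]
  simp only [h]

lemma coeff_simple (j i : Fin ℓ) : R.coeff (R.Δ j) i = if i = j then 1 else 0 := by
  rw [R.coeff_eq_of_eq_sum (R.Δ_mem j) (fun i => if i = j then 1 else 0) (by simp)]

lemma neg_mem {α : V} (hα : α ∈ R.Φ) : -α ∈ R.Φ := by
  have h := R.reflect_mem α hα α hα
  rwa [pairing_self (R.nonzero α hα), two_smul, sub_add_cancel_left] at h

lemma coeff_neg {α : V} (hα : α ∈ R.Φ) (i : Fin ℓ) : R.coeff (-α) i = -R.coeff α i := by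
  rw [R.coeff_eq_of_eq_sum (R.neg_mem hα) (fun i => -R.coeff α i)]
  conv_lhs => rw [R.coeff_spec α hα]
  simp [Finset.sum_neg_distrib]

lemma coeff_sub_intCast_smul {α β : V} (hα : α ∈ R.Φ) (hβ : β ∈ R.Φ) (n : ℤ)
    (h : β - (n : ℝ) • α ∈ R.Φ) (i : Fin ℓ) :
    R.coeff (β - (n : ℝ) • α) i = R.coeff β i - n * R.coeff α i := by
  rw [R.coeff_eq_of_eq_sum h (fun i => R.coeff β i - n * R.coeff α i)]
  conv_lhs => rw [R.coeff_spec α hα, R.coeff_spec β hβ]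
  simp only [Int.cast_sub, Int.cast_mul, sub_smul, mul_smul, Finset.sum_sub_distrib,
    Finset.smul_sum]

lemma coeff_sub {α β : V} (hα : α ∈ R.Φ) (hβ : β ∈ R.Φ) (h : β - α ∈ R.Φ) (i : Fin ℓ) :
    R.coeff (β - α) i = R.coeff β i - R.coeff α i := by
  simpa using R.coeff_sub_intCast_smul hα hβ 1 (by simpa using h) i

lemma sub_mem_of_pairing_eq_one {α β : V} (hα : α ∈ R.Φ) (hβ : β ∈ R.Φ)
    (h : pairing β α = 1) : α - β ∈ R.Φ := by
  have h' := R.neg_mem (R.reflect_mem α hα β hβ)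
  rwa [h, one_smul, neg_sub] at h'

lemma inner_eq_coeff_mul_of_forall_ne {α v : V} (hα : α ∈ R.Φ) {i₀ : Fin ℓ}
    (horth : ∀ j, j ≠ i₀ → ⟪R.Δ j, v⟫ = 0) : ⟪α, v⟫ = R.coeff α i₀ * ⟪R.Δ i₀, v⟫ := by
  conv_lhs => rw [R.coeff_spec α hα]
  rw [sum_inner, Finset.sum_eq_single i₀
    (fun j _ hj => by rw [real_inner_smul_left, horth j hj, mul_zero]) (by simp),
    real_inner_smul_left]

lemma isTypeA_of_le_one (h : ℓ ≤ 1) : R.IsTypeA := by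
  have : Subsingleton (Fin ℓ) := Fin.subsingleton_iff_le_one.mpr h
  refine ⟨Equiv.refl _, fun i j => ?_⟩
  rw [Subsingleton.elim i j, if_pos rfl, pairing_self (R.nonzero _ (R.Δ_mem _))]

namespace IsHighestRoot

variable {R} {θ : V}

lemma one_le_coeff (hθ : R.IsHighestRoot θ) (i : Fin ℓ) : 1 ≤ R.coeff θ i := by
  simpa [coeff_simple] using hθ.2 (R.Δ i) (R.Δ_mem i) i

lemma le_one_of_simple_eq (hθ : R.IsHighestRoot θ) {i : Fin ℓ} (h : R.Δ i = θ) : ℓ ≤ 1 := by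
  have hi : ∀ j, j = i := fun j => by
    by_contra hji
    simpa [← h, coeff_simple, hji] using hθ.one_le_coeff j
  exact Fin.subsingleton_iff_le_one.mp ⟨fun j k => (hi j).trans (hi k).symm⟩

lemma inner_simple_nonneg (hθ : R.IsHighestRoot θ) (i : Fin ℓ) : 0 ≤ ⟪R.Δ i, θ⟫ := by
  obtain ⟨n, hn⟩ := R.crystallographic (R.Δ i) (R.Δ_mem i) θ hθ.1
  have hmem := R.reflect_mem (R.Δ i) (R.Δ_mem i) θ hθ.1
  rw [hn] at hmem
  have h := hθ.2 _ hmem i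
  rw [R.coeff_sub_intCast_smul (R.Δ_mem i) hθ.1 n hmem, coeff_simple, if_pos rfl] at h
  rw [real_inner_comm, ← pairing_nonneg_iff (R.nonzero _ (R.Δ_mem i)), hn]
  exact_mod_cast (by omega : 0 ≤ n)

lemma eq_of_one_lt_pairing (hθ : R.IsHighestRoot θ) {β : V} (hβ : β ∈ R.Φ)
    (h : 1 < pairing β θ) : β = θ := by
  obtain ⟨n, hn⟩ := R.crystallographic θ hθ.1 β hβ
  have hn2 : 2 ≤ n := by
    rw [hn] at h
    exact_mod_cast h
  have hmem := R.reflect_mem θ hθ.1 β hβ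
  rw [hn] at hmem
  refine R.eq_of_coeff_eq hβ hθ.1 fun i => ?_
  have h₁ := hθ.2 _ (R.neg_mem hmem) i
  rw [R.coeff_neg hmem, R.coeff_sub_intCast_smul hθ.1 hβ n hmem] at h₁
  have h₂ := hθ.2 β hβ i
  have h₃ := hθ.one_le_coeff i
  nlinarith

lemma pairing_le_one (hθ : R.IsHighestRoot θ) {β : V} (hβ : β ∈ R.Φ) (hne : β ≠ θ) :
    pairing β θ ≤ 1 :=
  not_lt.mp fun h => hne (hθ.eq_of_one_lt_pairing hβ h)

lemma pairing_eq_one_of_inner_pos (hθ : R.IsHighestRoot θ) {β : V} (hβ : β ∈ R.Φ)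
    (hne : β ≠ θ) (hpos : 0 < ⟪β, θ⟫) : pairing β θ = 1 := by
  obtain ⟨n, hn⟩ := R.crystallographic θ hθ.1 β hβ
  have h₁ := hθ.pairing_le_one hβ hne
  have h₂ := (pairing_pos_iff (R.nonzero θ hθ.1)).mpr hpos
  rw [hn] at h₁ h₂ ⊢
  exact_mod_cast le_antisymm (by exact_mod_cast h₁ : n ≤ 1) (by exact_mod_cast h₂ : 0 < n)

lemma coeff_lt_of_ne (hθ : R.IsHighestRoot θ) {β : V} (hβ : β ∈ R.Φ) (hne : β ≠ θ)
    {i₀ : Fin ℓ} (horth : ∀ j, j ≠ i₀ → ⟪R.Δ j, θ⟫ = 0) : R.coeff β i₀ < R.coeff θ i₀ := by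
  refine (hθ.2 β hβ i₀).lt_of_ne fun h => hne (hθ.eq_of_one_lt_pairing hβ ?_)
  have hinner : ⟪β, θ⟫ = ⟪θ, θ⟫ := by
    rw [R.inner_eq_coeff_mul_of_forall_ne hβ horth, R.inner_eq_coeff_mul_of_forall_ne hθ.1 horth,
      h]
  rw [pairing, hinner, ← pairing, pairing_self (R.nonzero θ hθ.1)]
  norm_num

end IsHighestRoot

end BasedRootSystem

open BasedRootSystem in
theorem root_le_highest_sub_simple_general {ℓ : ℕ} {V : Type*} [NormedAddCommGroup V]
    [InnerProductSpace ℝ V] (R : BasedRootSystem ℓ V)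
    (hA : ¬ R.IsTypeA) (θ : V) (hθ : R.IsHighestRoot θ)
    (i₀ : Fin ℓ) (hi₀ : ⟪R.Δ i₀, θ⟫ ≠ 0)
    (huniq : ∀ i : Fin ℓ, ⟪R.Δ i, θ⟫ ≠ 0 → i = i₀) :
    θ - R.Δ i₀ ∈ R.Φ ∧
    (∀ β ∈ R.Φ, β ≠ θ → ∀ i : Fin ℓ, R.coeff β i ≤ R.coeff (θ - R.Δ i₀) i) ∧
    pairing (θ - R.Δ i₀) θ = 1 ∧
    (∀ β ∈ R.Φ, β ≠ θ → pairing β θ ≤ 1) := by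
  have horth : ∀ j, j ≠ i₀ → ⟪R.Δ j, θ⟫ = 0 := fun j hj => not_not.mp (mt (huniq j) hj)
  have hne : R.Δ i₀ ≠ θ := fun h => hA (R.isTypeA_of_le_one (hθ.le_one_of_simple_eq h))
  have hp : pairing (R.Δ i₀) θ = 1 :=
    hθ.pairing_eq_one_of_inner_pos (R.Δ_mem i₀) hne ((hθ.inner_simple_nonneg i₀).lt_of_ne' hi₀)
  have hmem : θ - R.Δ i₀ ∈ R.Φ := R.sub_mem_of_pairing_eq_one hθ.1 (R.Δ_mem i₀) hp
  refine ⟨hmem, fun β hβ hβθ i => ?_, ?_, fun β => hθ.pairing_le_one⟩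
  · rw [R.coeff_sub (R.Δ_mem i₀) hθ.1 hmem, coeff_simple]
    split_ifs with hi
    · subst hi
      linarith [hθ.coeff_lt_of_ne hβ hβθ horth]
    · simpa using hθ.2 β hβ i
  · rw [pairing_sub_left, pairing_self (R.nonzero θ hθ.1), hp]
    norm_num

/-- If the root system is irreducible and not of type `A`, `θ` is the
highest root and `α_{i₀}` is the unique simple root with `(α_{i₀}, θ) ≠ 0`, then
`θ − α_{i₀}` is a root, every root `β ≠ θ` satisfies `β ≤ θ − α_{i₀}` in the
dominance order, and in particular `⟨β, θ∨⟩ ≤ ⟨θ − α_{i₀}, θ∨⟩ = 1`. -/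
theorem root_le_highest_sub_simple {ℓ : ℕ} {V : Type*} [NormedAddCommGroup V]
    [InnerProductSpace ℝ V] (R : BasedRootSystem ℓ V) (hirr : R.IsIrreducible)
    (hA : ¬ R.IsTypeA) (θ : V) (hθ : R.IsHighestRoot θ)
    (i₀ : Fin ℓ) (hi₀ : ⟪R.Δ i₀, θ⟫ ≠ 0)
    (huniq : ∀ i : Fin ℓ, ⟪R.Δ i, θ⟫ ≠ 0 → i = i₀) :
    θ - R.Δ i₀ ∈ R.Φ ∧
    (∀ β ∈ R.Φ, β ≠ θ → ∀ i : Fin ℓ, R.coeff β i ≤ R.coeff (θ - R.Δ i₀) i) ∧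
    pairing (θ - R.Δ i₀) θ = 1 ∧
    (∀ β ∈ R.Φ, β ≠ θ → pairing β θ ≤ 1) :=
  root_le_highest_sub_simple_general R hA θ hθ i₀ hi₀ huniq
end

section
/- Let V be a finite-dimensional vector space over an infinite field and let Z ⊆ V be a subset spanning V that is a cone (closed under scalar multiplication) and is irreducible in the Zariski topology. If φ : V → V is a linear endomorphism such that φ(z) ∈ span{z} for every z ∈ Z, then φ is a scalar multiple of the identity. -/
/-!
The kernels of `φ - c • id`, for `c` ranging over the finitely many eigenvalues of `φ`
together with `0`, are Zariski closed and cover `Z`, since every `z ∈ Z` is an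
eigenvector of `φ` or zero. By irreducibility one of them contains `Z`, hence its
span `V`.
-/

/-- The algebra of polynomial functions on a vector space `V` over `k`: the
subalgebra of `V → k` generated by the linear functionals. -/
noncomputable def polyFunctions (k V : Type*) [Field k] [AddCommGroup V]
    [Module k V] : Subalgebra k (V → k) :=
  Algebra.adjoin k {f : V → k | ∃ g : V →ₗ[k] k, f = ⇑g}

/-- A subset of `V` is Zariski closed when it is the common zero locus of a set of
polynomial functions on `V`. -/
def IsZariskiClosed (k : Type*) {V : Type*} [Field k] [AddCommGroup V] [Module k V]
    (C : Set V) : Prop :=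
  ∃ S : Set (V → k), (∀ f ∈ S, f ∈ polyFunctions k V) ∧
    C = {x : V | ∀ f ∈ S, f x = 0}

/-- A subset `Z ⊆ V` is irreducible in the Zariski topology when it is nonempty and
whenever it is covered by two Zariski closed sets it is contained in one of them. -/
def IsZariskiIrreducible (k : Type*) {V : Type*} [Field k] [AddCommGroup V]
    [Module k V] (Z : Set V) : Prop :=
  Z.Nonempty ∧ ∀ C₁ C₂ : Set V, IsZariskiClosed k C₁ → IsZariskiClosed k C₂ →
    Z ⊆ C₁ ∪ C₂ → Z ⊆ C₁ ∨ Z ⊆ C₂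

section Zariski

variable {k V : Type*} [Field k] [AddCommGroup V] [Module k V]

lemma isZariskiClosed_ker {W : Type*} [AddCommGroup W] [Module k W] (ψ : V →ₗ[k] W) :
    IsZariskiClosed k (LinearMap.ker ψ : Set V) := by
  refine ⟨{f | ∃ g : Module.Dual k W, f = ⇑(g ∘ₗ ψ)}, ?_, ?_⟩
  · rintro f ⟨g, rfl⟩
    exact Algebra.subset_adjoin ⟨g ∘ₗ ψ, rfl⟩
  · ext x
    simp only [SetLike.mem_coe, LinearMap.mem_ker, Set.mem_ofPred_eq, forall_exists_index,
      forall_eq_apply_imp_iff, LinearMap.coe_comp, Function.comp_apply]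
    exact (Module.forall_dual_apply_eq_zero_iff k (ψ x)).symm

lemma isZariskiClosed_empty : IsZariskiClosed k (∅ : Set V) :=
  ⟨{1}, by simp [(polyFunctions k V).one_mem], by ext; simp⟩

/-- The union is cut out by the pairwise products of the defining functions. -/
lemma IsZariskiClosed.union {C₁ C₂ : Set V} (h₁ : IsZariskiClosed k C₁)
    (h₂ : IsZariskiClosed k C₂) : IsZariskiClosed k (C₁ ∪ C₂) := by
  obtain ⟨S₁, hS₁, rfl⟩ := h₁
  obtain ⟨S₂, hS₂, rfl⟩ := h₂
  refine ⟨{h | ∃ f ∈ S₁, ∃ g ∈ S₂, h = f * g}, ?_, ?_⟩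
  · rintro h ⟨f, hf, g, hg, rfl⟩
    exact (polyFunctions k V).mul_mem (hS₁ f hf) (hS₂ g hg)
  · ext x
    simp only [Set.mem_union, Set.mem_ofPred_eq]
    constructor
    · rintro (h | h) _ ⟨f, hf, g, hg, rfl⟩
      · simp [h f hf]
      · simp [h g hg]
    · intro h
      by_contra! ⟨⟨f, hf, hfx⟩, ⟨g, hg, hgx⟩⟩
      exact mul_ne_zero hfx hgx (h (f * g) ⟨f, hf, g, hg, rfl⟩)

lemma isZariskiClosed_finset_biUnion {ι : Type*} (s : Finset ι) {C : ι → Set V}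
    (hC : ∀ i, IsZariskiClosed k (C i)) : IsZariskiClosed k (⋃ i ∈ s, C i) := by
  classical
  induction s using Finset.induction with
  | empty => simpa using isZariskiClosed_empty
  | insert i s _ ih => simpa [Finset.set_biUnion_insert] using (hC i).union ih

lemma IsZariskiIrreducible.exists_subset_of_subset_biUnion {Z : Set V}
    (hZ : IsZariskiIrreducible k Z) {ι : Type*} (s : Finset ι) {C : ι → Set V}
    (hC : ∀ i, IsZariskiClosed k (C i)) (hsub : Z ⊆ ⋃ i ∈ s, C i) : ∃ i ∈ s, Z ⊆ C i := by
  classical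
  induction s using Finset.induction with
  | empty =>
    obtain ⟨z, hz⟩ := hZ.1
    simpa using hsub hz
  | insert i s _ ih =>
    rw [Finset.set_biUnion_insert] at hsub
    rcases hZ.2 _ _ (hC i) (isZariskiClosed_finset_biUnion s hC) hsub with h | h
    · exact ⟨i, Finset.mem_insert_self i s, h⟩
    · obtain ⟨j, hj, hZj⟩ := ih h
      exact ⟨j, Finset.mem_insert_of_mem hj, hZj⟩

end Zariski

namespace Module.End

variable {k V : Type*} [Field k] [AddCommGroup V] [Module k V] [FiniteDimensional k V]

lemma subset_biUnion_ker_of_mem_span_singleton [DecidableEq k] (φ : Module.End k V) {Z : Set V}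
    (hφ : ∀ z ∈ Z, φ z ∈ Submodule.span k {z}) :
    Z ⊆ ⋃ c ∈ insert 0 φ.finite_hasEigenvalue.toFinset,
      (LinearMap.ker (φ - c • LinearMap.id) : Set V) := by
  intro z hz
  obtain ⟨c, hc⟩ := Submodule.mem_span_singleton.mp (hφ z hz)
  by_cases hz0 : z = 0
  · exact Set.mem_biUnion (Finset.mem_insert_self 0 _) (by simp [hz0])
  · have heig : φ.HasEigenvalue c :=
      hasEigenvalue_of_hasEigenvector ⟨mem_eigenspace_iff.mpr hc.symm, hz0⟩
    exact Set.mem_biUnion (Finset.mem_insert_of_mem (Set.Finite.mem_toFinset _ |>.mpr heig))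
      (by simp [hc])

end Module.End

theorem endomorphism_preserving_irreducible_cone_is_scalar_general
    {k V : Type*} [Field k] [AddCommGroup V] [Module k V]
    [FiniteDimensional k V]
    (Z : Set V) (hspan : Submodule.span k Z = ⊤)
    (hirr : IsZariskiIrreducible k Z)
    (φ : V →ₗ[k] V) (hφ : ∀ z ∈ Z, φ z ∈ Submodule.span k {z}) :
    ∃ c : k, φ = c • LinearMap.id := by
  classical
  obtain ⟨c, -, hZc⟩ := hirr.exists_subset_of_subset_biUnion _
    (fun c => isZariskiClosed_ker (φ - c • LinearMap.id))
    (Module.End.subset_biUnion_ker_of_mem_span_singleton φ hφ)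
  exact ⟨c, LinearMap.ext_on hspan fun z hz => sub_eq_zero.mp (hZc hz)⟩

/-- Let `V` be a finite-dimensional vector space over an infinite
field `k` and `Z ⊆ V` a spanning subset which is a cone and is irreducible in the
Zariski topology.  If a linear endomorphism `φ` of `V` satisfies `φ(z) ∈ span{z}`
for every `z ∈ Z`, then `φ` is a scalar multiple of the identity. -/
theorem endomorphism_preserving_irreducible_cone_is_scalar
    {k V : Type*} [Field k] [Infinite k] [AddCommGroup V] [Module k V]
    [FiniteDimensional k V]
    (Z : Set V) (hspan : Submodule.span k Z = ⊤)
    (hcone : ∀ c : k, ∀ z ∈ Z, c • z ∈ Z)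
    (hirr : IsZariskiIrreducible k Z)
    (φ : V →ₗ[k] V) (hφ : ∀ z ∈ Z, φ z ∈ Submodule.span k {z}) :
    ∃ c : k, φ = c • LinearMap.id :=
  endomorphism_preserving_irreducible_cone_is_scalar_general Z hspan hirr φ hφ
end
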